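/- If A and B are l-regular languages over Σ, then their concatenation AB, defined by (AB)(ω) = ⋁{ A(ω₁) ∧ B(ω₂) : ω₁ω₂ = ω }, is an l-regular language. -/

import Mathlib

/-- A complete orthomodular lattice. -/
class OrthomodularCompleteLattice (α : Type*) extends CompleteLattice α, Compl α where
  inf_compl_self : ∀ a : α, a ⊓ aᶜ = ⊥
  sup_compl_self : ∀ a : α, a ⊔ aᶜ = ⊤
  compl_compl' : ∀ a : α, aᶜᶜ = a
  compl_antitone : ∀ a b : α, a ≤ b → bᶜ ≤ aᶜ
  orthomodular : ∀ a b : α, a ≤ b → b = a ⊔ (aᶜ ⊓ b)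

/-- An `l`-valued finite automaton (`l`-VFA). -/
structure LVFA (Q A l : Type*) where
  δ : Q → A → Q → l
  init : Q → l
  final : Q → l

/-- The `l`-valued language recognized by an `l`-VFA. -/
def lvfaLang {Q A l : Type*} [OrthomodularCompleteLattice l] (M : LVFA Q A l)
    (w : List A) : l :=
  ⨆ path : Fin (w.length + 1) → Q,
    M.init (path 0) ⊓
      (⨅ i : Fin w.length, M.δ (path i.castSucc) (w.get i) (path i.succ)) ⊓
      M.final (path (Fin.last w.length))

/-- An `l`-valued deterministic finite automaton (`l`-VDFA). -/
structure LVDFA (Q A l : Type*) where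
  next : Q → A → Q
  start : Q
  final : Q → l

/-- The `l`-valued language recognized by an `l`-VDFA. -/
def lvdfaLang {Q A l : Type*} (M : LVDFA Q A l) (w : List A) : l :=
  M.final (w.foldl M.next M.start)

/-- An `l`-valued finite automaton with ε-moves (`ε` is encoded as `none`). -/
structure LVFAe (Q A l : Type*) where
  δ : Q → Option A → Q → l
  init : Q → l
  final : Q → l

/-- The `l`-valued language recognized by an `l`-VFA with ε-moves. -/
def lvfaeLang {Q A l : Type*} [OrthomodularCompleteLattice l] (M : LVFAe Q A l)
    (w : List A) : l :=
  ⨆ n : ℕ, ⨆ τ : Fin n → Option A, ⨆ _ : (List.ofFn τ).reduceOption = w,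
    ⨆ path : Fin (n + 1) → Q,
      M.init (path 0) ⊓
        (⨅ i : Fin n, M.δ (path i.castSucc) (τ i) (path i.succ)) ⊓
        M.final (path (Fin.last n))

/-- An `l`-valued language is `l`-regular if it is recognized by some `l`-VFA. -/
def IsLRegular {A l : Type*} [OrthomodularCompleteLattice l] (f : List A → l) : Prop :=
  ∃ (Q : Type) (_ : Fintype Q) (M : LVFA Q A l), ∀ w, lvfaLang M w = f w

/-!
Since `l` need not be distributive, gluing two `l`-VFAs by moves from final to initial states is
not sound: `⨆ i, ⨆ j, x i ⊓ y j` may be strictly below `(⨆ i, x i) ⊓ ⨆ j, y j`. Determinism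
avoids this. Over a finite alphabet the value of a word in an `l`-VFA depends only on its profile:
for each pair of end states, the collection of sets of labelled edges traversed by the paths
between them. Profiles form a finite set and can be updated letter by letter, so every
`l`-regular language is recognised by an `l`-VDFA. For `l`-VDFAs the subset construction works:
run the first automaton and keep the set of pairs (state of the first at a split point, state of
the second since then). The output is a join over this set, that is over all factorisations
`w = w₁ ++ w₂`, and an `l`-VDFA is an `l`-VFA with crisp transitions.
-/

namespace LVDFA

variable {Q A l : Type*}

def eval (D : LVDFA Q A l) (w : List A) : Q :=
  w.foldl D.next D.start

lemma lvdfaLang_eq_final_eval (D : LVDFA Q A l) (w : List A) :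
    lvdfaLang D w = D.final (D.eval w) :=
  rfl

@[simp]
lemma eval_nil (D : LVDFA Q A l) : D.eval [] = D.start :=
  rfl

lemma eval_append_singleton (D : LVDFA Q A l) (w : List A) (σ : A) :
    D.eval (w ++ [σ]) = D.next (D.eval w) σ := by
  simp [eval]

lemma eval_take_succ (D : LVDFA Q A l) (w : List A) (i : Fin w.length) :
    D.eval (w.take (i + 1)) = D.next (D.eval (w.take i)) (w.get i) := by
  rw [← List.take_concat_get' w i i.isLt, eval_append_singleton]
  rfl

lemma path_eq_eval_take {D : LVDFA Q A l} {w : List A} {path : Fin (w.length + 1) → Q}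
    (h₀ : path 0 = D.start)
    (hstep : ∀ i : Fin w.length, path i.succ = D.next (path i.castSucc) (w.get i))
    (j : Fin (w.length + 1)) : path j = D.eval (w.take j) := by
  induction j using Fin.induction with
  | zero => simpa using h₀
  | succ i ih => rw [hstep, ih, Fin.val_castSucc, Fin.val_succ, eval_take_succ]

def toLVFA [DecidableEq Q] [Top l] [Bot l] (D : LVDFA Q A l) : LVFA Q A l where
  δ q σ q' := if q' = D.next q σ then ⊤ else ⊥
  init q := if q = D.start then ⊤ else ⊥
  final := D.final

theorem lvfaLang_toLVFA [DecidableEq Q] [OrthomodularCompleteLattice l] (D : LVDFA Q A l) :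
    lvfaLang D.toLVFA = lvdfaLang D := by
  funext w
  apply le_antisymm
  · refine iSup_le fun path => ?_
    by_cases h₀ : path 0 = D.start
    · by_cases hstep : ∀ i : Fin w.length, path i.succ = D.next (path i.castSucc) (w.get i)
      · calc _ ≤ D.final (path (Fin.last w.length)) := inf_le_right
          _ = lvdfaLang D w := by
            rw [path_eq_eval_take h₀ hstep, Fin.val_last, List.take_length,
              lvdfaLang_eq_final_eval]
      · obtain ⟨i, hi⟩ := not_forall.mp hstep
        calc _ ≤ D.toLVFA.δ (path i.castSucc) (w.get i) (path i.succ) :=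
              inf_le_left.trans (inf_le_right.trans (iInf_le _ i))
          _ = ⊥ := if_neg hi
          _ ≤ _ := bot_le
    · calc _ ≤ D.toLVFA.init (path 0) := inf_le_left.trans inf_le_left
        _ = ⊥ := if_neg h₀
        _ ≤ _ := bot_le
  · refine le_trans ?_ (le_iSup _ fun j : Fin (w.length + 1) => D.eval (w.take j))
    simp [toLVFA, eval_take_succ, lvdfaLang_eq_final_eval]

theorem isLRegular {Q : Type} [Fintype Q] [OrthomodularCompleteLattice l] (D : LVDFA Q A l) :
    IsLRegular (lvdfaLang D) := by
  classical
  exact ⟨Q, inferInstance, D.toLVFA, fun w => by rw [lvfaLang_toLVFA]⟩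

end LVDFA

namespace LVFA

variable {Q : Type} {A l : Type*} [Fintype A]

-- Letters are recorded through `Fintype.equivFin A`, so that profiles live in `Type`.
abbrev Edge (Q : Type) (A : Type*) [Fintype A] : Type :=
  Q × Fin (Fintype.card A) × Q

abbrev Profile (Q : Type) (A : Type*) [Fintype A] : Type :=
  Q → Q → Set (Set (Edge Q A))

noncomputable def pathEdges (w : List A) (path : Fin (w.length + 1) → Q) : Set (Edge Q A) :=
  Set.range fun i : Fin w.length => (path i.castSucc, Fintype.equivFin A (w.get i), path i.succ)

noncomputable def profile (w : List A) : Profile Q A := fun q q' =>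
  {E | ∃ path : Fin (w.length + 1) → Q,
    path 0 = q ∧ path (Fin.last w.length) = q' ∧ E = pathEdges w path}

def Profile.comp (p p' : Profile Q A) : Profile Q A := fun q q' =>
  {E | ∃ r, ∃ E₀ ∈ p q r, ∃ E₁ ∈ p' r q', E = E₀ ∪ E₁}

noncomputable def Profile.step (p : Profile Q A) (σ : A) : Profile Q A := fun q q' =>
  {E | ∃ r, ∃ E₀ ∈ p q r, E = insert (r, Fintype.equivFin A σ, q') E₀}

lemma pathEdges_cons (σ : A) (w : List A) (path : Fin (w.length + 2) → Q) :
    pathEdges (σ :: w) path =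
      insert (path 0, Fintype.equivFin A σ, path 1) (pathEdges w (Fin.tail path)) := by
  rw [pathEdges, Fin.range_fin_succ]
  rfl

lemma profile_nil (q q' : Q) : profile ([] : List A) q q' = {E | q = q' ∧ E = ∅} := by
  ext E
  constructor
  · rintro ⟨path, rfl, rfl, rfl⟩
    exact ⟨rfl, by simp [pathEdges]⟩
  · rintro ⟨rfl, rfl⟩
    exact ⟨fun _ => q, rfl, rfl, by simp [pathEdges]⟩

lemma profile_cons (σ : A) (w : List A) (q q' : Q) :
    profile (σ :: w) q q' =
      {E | ∃ r, ∃ E₁ ∈ profile w r q', E = insert (q, Fintype.equivFin A σ, r) E₁} := by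
  ext E
  constructor
  · rintro ⟨path, rfl, rfl, rfl⟩
    exact ⟨path 1, _, ⟨Fin.tail path, rfl, rfl, rfl⟩, pathEdges_cons σ w path⟩
  · rintro ⟨r, E₁, ⟨path, rfl, rfl, rfl⟩, rfl⟩
    exact ⟨Fin.cons q path, rfl, rfl, by rw [pathEdges_cons, Fin.tail_cons]; rfl⟩

lemma comp_profile_nil (p : Profile Q A) : Profile.comp p (profile []) = p := by
  funext q q'
  ext E
  simp only [Profile.comp, profile_nil]
  constructor
  · rintro ⟨r, E₀, h₀, E₁, ⟨rfl, rfl⟩, rfl⟩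
    simpa using h₀
  · exact fun h => ⟨q', E, h, ∅, ⟨rfl, rfl⟩, (Set.union_empty E).symm⟩

lemma profile_nil_comp (p : Profile Q A) : Profile.comp (profile []) p = p := by
  funext q q'
  ext E
  simp only [Profile.comp, profile_nil]
  constructor
  · rintro ⟨r, E₀, ⟨rfl, rfl⟩, E₁, h₁, rfl⟩
    simpa using h₁
  · exact fun h => ⟨q, ∅, ⟨rfl, rfl⟩, E, h, (Set.empty_union E).symm⟩

lemma foldl_step (w : List A) (p : Profile Q A) :
    w.foldl Profile.step p = Profile.comp p (profile w) := by
  induction w generalizing p with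
  | nil => exact (comp_profile_nil p).symm
  | cons σ w ih =>
    rw [List.foldl_cons, ih]
    funext q q'
    ext E
    simp only [Profile.comp, Profile.step, profile_cons]
    constructor
    · rintro ⟨r, _, ⟨s, E₀, h₀, rfl⟩, E₁, h₁, rfl⟩
      exact ⟨s, E₀, h₀, _, ⟨r, E₁, h₁, rfl⟩, by rw [Set.union_insert, Set.insert_union]⟩
    · rintro ⟨s, E₀, h₀, _, ⟨r, E₁, h₁, rfl⟩, rfl⟩
      exact ⟨r, _, ⟨s, E₀, h₀, rfl⟩, E₁, h₁, by rw [Set.union_insert, Set.insert_union]⟩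

section CompleteLattice

variable [CompleteLattice l]

noncomputable def weight (δ : Q → A → Q → l) (E : Set (Edge Q A)) : l :=
  ⨅ e ∈ E, δ e.1 ((Fintype.equivFin A).symm e.2.1) e.2.2

lemma weight_pathEdges (δ : Q → A → Q → l) (w : List A) (path : Fin (w.length + 1) → Q) :
    weight δ (pathEdges w path) =
      ⨅ i : Fin w.length, δ (path i.castSucc) (w.get i) (path i.succ) := by
  rw [weight, pathEdges, iInf_range]
  simp only [Equiv.symm_apply_apply]

noncomputable def Profile.value (M : LVFA Q A l) (p : Profile Q A) : l :=
  ⨆ q, ⨆ q', ⨆ E ∈ p q q', M.init q ⊓ weight M.δ E ⊓ M.final q'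

noncomputable def toLVDFA (M : LVFA Q A l) : LVDFA (Profile Q A) A l where
  next := Profile.step
  start := profile []
  final := Profile.value M

end CompleteLattice

variable [OrthomodularCompleteLattice l]

lemma value_profile (M : LVFA Q A l) (w : List A) :
    Profile.value M (profile w) = lvfaLang M w := by
  apply le_antisymm
  · refine iSup_le fun q => iSup_le fun q' => iSup₂_le fun E hE => ?_
    obtain ⟨path, rfl, rfl, rfl⟩ := hE
    rw [weight_pathEdges]
    exact le_iSup_of_le path le_rfl
  · refine iSup_le fun path => ?_
    rw [← weight_pathEdges]
    exact le_iSup_of_le (path 0) <| le_iSup_of_le (path (Fin.last w.length)) <|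
      le_iSup₂_of_le (pathEdges w path) ⟨path, rfl, rfl, rfl⟩ le_rfl

theorem lvdfaLang_toLVDFA (M : LVFA Q A l) :
    lvdfaLang M.toLVDFA = lvfaLang M := by
  funext w
  calc lvdfaLang M.toLVDFA w = Profile.value M (w.foldl Profile.step (profile [])) := rfl
    _ = Profile.value M (profile w) := by rw [foldl_step, profile_nil_comp]
    _ = lvfaLang M w := value_profile M w

end LVFA

theorem IsLRegular.exists_lvdfa {A l : Type*} [Fintype A] [OrthomodularCompleteLattice l]
    {f : List A → l} (hf : IsLRegular f) :
    ∃ (Q : Type) (_ : Fintype Q) (D : LVDFA Q A l), lvdfaLang D = f := by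
  classical
  obtain ⟨Q, _, M, hM⟩ := hf
  exact ⟨_, inferInstance, M.toLVDFA, by rw [LVFA.lvdfaLang_toLVDFA]; exact funext hM⟩

lemma List.splits_nil {A : Type*} : {s : List A × List A | s.1 ++ s.2 = []} = {([], [])} := by
  ext ⟨u, v⟩
  simp

lemma List.splits_append_singleton {A : Type*} (w : List A) (σ : A) :
    {s : List A × List A | s.1 ++ s.2 = w ++ [σ]} =
      insert (w ++ [σ], [])
        ((fun s : List A × List A => (s.1, s.2 ++ [σ])) '' {s | s.1 ++ s.2 = w}) := by
  ext ⟨u, v⟩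
  rcases List.eq_nil_or_concat v with rfl | ⟨v, τ, rfl⟩
  · simp
  · simp [← List.append_assoc, @eq_comm _ τ]

namespace LVDFA

variable {Q₁ Q₂ A l : Type*} [CompleteLattice l]

def concat (D₁ : LVDFA Q₁ A l) (D₂ : LVDFA Q₂ A l) :
    LVDFA (Q₁ × Set (Q₁ × Q₂)) A l where
  next s σ := (D₁.next s.1 σ, insert (D₁.next s.1 σ, D₂.start) (Prod.map id (D₂.next · σ) '' s.2))
  start := (D₁.start, {(D₁.start, D₂.start)})
  final s := ⨆ x ∈ s.2, D₁.final x.1 ⊓ D₂.final x.2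

lemma eval_concat (D₁ : LVDFA Q₁ A l) (D₂ : LVDFA Q₂ A l) (w : List A) :
    (D₁.concat D₂).eval w =
      (D₁.eval w,
        (fun s : List A × List A => (D₁.eval s.1, D₂.eval s.2)) '' {s | s.1 ++ s.2 = w}) := by
  induction w using List.reverseRecOn with
  | nil => rw [List.splits_nil, Set.image_singleton]; rfl
  | append_singleton w σ ih =>
    rw [eval_append_singleton, ih, List.splits_append_singleton, Set.image_insert_eq]
    simp [concat, eval_append_singleton, Set.image_image]

theorem lvdfaLang_concat (D₁ : LVDFA Q₁ A l) (D₂ : LVDFA Q₂ A l) (w : List A) :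
    lvdfaLang (D₁.concat D₂) w =
      ⨆ w₁, ⨆ w₂, ⨆ _ : w₁ ++ w₂ = w, lvdfaLang D₁ w₁ ⊓ lvdfaLang D₂ w₂ := by
  rw [lvdfaLang_eq_final_eval, eval_concat]
  simp only [concat]
  rw [iSup_image]
  simp only [Set.mem_ofPred_eq, iSup_prod, lvdfaLang_eq_final_eval]

end LVDFA

/-- `l`-regular languages are closed under concatenation. -/
theorem lregular_concat {l A : Type*} [OrthomodularCompleteLattice l] [Fintype A]
    (f g : List A → l) (hf : IsLRegular f) (hg : IsLRegular g) :
    IsLRegular (fun w => ⨆ w₁ : List A, ⨆ w₂ : List A, ⨆ _ : w₁ ++ w₂ = w, f w₁ ⊓ g w₂) := by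
  obtain ⟨Q₁, _, D₁, rfl⟩ := hf.exists_lvdfa
  obtain ⟨Q₂, _, D₂, rfl⟩ := hg.exists_lvdfa
  simpa only [← LVDFA.lvdfaLang_concat] using (D₁.concat D₂).isLRegular
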